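/- arXiv:2407.10232 — 9 statements merged into one kernel-verified Lean document; each statement's English description precedes it below -/
import Mathlib

section
/- Let R be a (not necessarily commutative) ring with identity and let a ∈ R be a weakly nil-clean element. Then −a is a weakly clean element of R. -/
/-- An element is weakly nil-clean if it is `q + e` or `q - e` for a nilpotent `q`
and an idempotent `e`. -/
def IsWeaklyNilCleanElem {R : Type*} [Ring R] (a : R) : Prop :=
  ∃ e q : R, IsIdempotentElem e ∧ IsNilpotent q ∧ (a = q + e ∨ a = q - e)

/-- An element is weakly clean if there is an idempotent `e` such that `a - e` or `a + e`
is a unit. -/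
def IsWeaklyCleanElem {R : Type*} [Ring R] (a : R) : Prop :=
  ∃ e : R, IsIdempotentElem e ∧ (IsUnit (a - e) ∨ IsUnit (a + e))

/-! If `a = q + e`, then `a + (1 - e) = q + 1`; if `a = q - e`, then `a - (1 - e) = q - 1`.
Both are units since `q` is nilpotent, so `a` is weakly clean via the idempotent `1 - e`.
Weak cleanness is symmetric under `a ↦ -a`, because `-a ∓ e = -(a ± e)`. -/

theorem IsWeaklyNilCleanElem.isWeaklyCleanElem {R : Type*} [Ring R] {a : R}
    (h : IsWeaklyNilCleanElem a) : IsWeaklyCleanElem a := by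
  obtain ⟨e, q, he, hq, rfl | rfl⟩ := h
  · refine ⟨1 - e, he.one_sub, Or.inr ?_⟩
    have hsum : q + e + (1 - e) = q + 1 := by abel
    exact hsum ▸ hq.isUnit_add_one
  · refine ⟨1 - e, he.one_sub, Or.inl ?_⟩
    have hdiff : q - e - (1 - e) = q - 1 := by abel
    exact hdiff ▸ hq.isUnit_sub_one

theorem IsWeaklyCleanElem.neg {R : Type*} [Ring R] {a : R} (h : IsWeaklyCleanElem a) :
    IsWeaklyCleanElem (-a) := by
  obtain ⟨e, he, hu | hu⟩ := h
  · exact ⟨e, he, Or.inr (by simpa only [neg_sub', sub_neg_eq_add] using hu.neg)⟩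
  · exact ⟨e, he, Or.inl (neg_add' a e ▸ hu.neg)⟩

theorem neg_isWeaklyCleanElem_of_isWeaklyNilCleanElem {R : Type*} [Ring R] (a : R)
    (h : IsWeaklyNilCleanElem a) : IsWeaklyCleanElem (-a) :=
  h.isWeaklyCleanElem.neg
end

section
/- If R is a GWNC ring, then the Jacobson radical J(R) is nil, i.e., every element of J(R) is nilpotent. -/
def IsGWNCRing (R : Type*) [Ring R] : Prop :=
  ∀ a : R, ¬IsUnit a → IsWeaklyNilCleanElem a

lemma idem_nilpotent_eq_zero {S : Type*} [Ring S] {e : S}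
    (he : IsIdempotentElem e) (hn : IsNilpotent e) : e = 0 := by
  obtain ⟨n, hn⟩ := hn
  calc e = e ^ (n + 1) := (he.pow_succ_eq n).symm
    _ = e ^ n * e := pow_succ e n
    _ = 0 := by rw [hn, zero_mul]

theorem jacobson_isNil_of_isGWNC {R : Type*} [Ring R] (h : IsGWNCRing R) :
    ∀ x ∈ Ideal.jacobson (⊥ : Ideal R), IsNilpotent x := by
  intro x hx
  by_cases hu : IsUnit x
  · -- x ∈ J(R) a unit forces 0 = 1, so x = 0
    obtain ⟨u, rfl⟩ := hu
    obtain ⟨z, hz⟩ := Ideal.mem_jacobson_iff.1 hx (-((u⁻¹ : Rˣ) : R))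
    rw [Ideal.mem_bot] at hz
    have hinv : ((u⁻¹ : Rˣ) : R) * (u : R) = 1 := u.inv_mul
    have h01 : (0 : R) = 1 := by
      have hzu : z * -((u⁻¹ : Rˣ) : R) * (u : R) = -z := by
        rw [mul_neg, neg_mul, mul_assoc, hinv, mul_one]
      rw [hzu, neg_add_cancel, zero_sub, neg_eq_zero] at hz
      exact hz.symm
    refine ⟨1, ?_⟩
    calc (u : R) ^ 1 = (u : R) * 1 := by rw [pow_one, mul_one]
      _ = (u : R) * 0 := by rw [h01]
      _ = 0 := mul_zero _
  · obtain ⟨e, q, he, hq, hcase⟩ := h x hu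
    -- the Jacobson radical as a two-sided ideal
    set J := Ideal.jacobson (⊥ : Ideal R) with hJ
    have hmr : ∀ {a b : R}, a ∈ J → a * b ∈ J :=
      fun ha => J.mul_mem_right _ ha
    let I : TwoSidedIdeal R := J.toTwoSided
    let c := I.ringCon
    let π : R →+* c.Quotient := c.mk'
    have hmem : ∀ a : R, π a = 0 ↔ a ∈ J := by
      intro a
      constructor
      · intro ha
        have : c a 0 := c.eq.mp ha
        exact Ideal.mem_toTwoSided.mp (I.mem_iff a |>.mpr this)
      · intro ha
        exact c.eq.mpr ((I.mem_iff a).mp (Ideal.mem_toTwoSided.mpr ha))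
    have hxq : π x = 0 := (hmem x).mpr hx
    have hqn : IsNilpotent (π q) := hq.map π
    have heq : π e = 0 := by
      apply idem_nilpotent_eq_zero (he.map π)
      rcases hcase with rfl | rfl
      · rw [map_add] at hxq
        rw [eq_neg_of_add_eq_zero_right hxq]
        exact hqn.neg
      · rw [map_sub, sub_eq_zero] at hxq
        rw [← hxq]
        exact hqn
    have heJ : e ∈ J := (hmem e).mp heq
    obtain ⟨z, hz⟩ := Ideal.mem_jacobson_iff.1 heJ (-1)
    rw [Ideal.mem_bot] at hz
    have hz' : z * (1 - e) = 1 := by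
      have key : z * (1 - e) - 1 = z * (-1) * e + z - 1 := by noncomm_ring
      have : z * (1 - e) - 1 = 0 := by rw [key, hz]
      exact sub_eq_zero.mp this
    have he0 : e = 0 := by
      calc e = 1 * e := (one_mul e).symm
        _ = z * (1 - e) * e := by rw [hz']
        _ = z * (e - e * e) := by rw [mul_assoc, sub_mul, one_mul]
        _ = z * 0 := by rw [he.eq, sub_self]
        _ = 0 := mul_zero z
    rcases hcase with rfl | rfl
    · rw [he0, add_zero]; exact hq
    · rw [he0, sub_zero]; exact hq
end

section
/- Let R be a GWNC ring in which 2 is a unit and every unit u ∈ R satisfies u² = 1. Then R is a commutative ring. -/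
theorem Commute.of_isUnit_of_forall_sq_eq_one {M : Type*} [Monoid M]
    (hu : ∀ u : M, IsUnit u → u ^ 2 = 1) {a b : M} (ha : IsUnit a) (hb : IsUnit b) :
    Commute a b := by
  obtain ⟨u, rfl⟩ := ha
  obtain ⟨v, rfl⟩ := hb
  have hsq : ∀ w : Mˣ, orderOf w ∣ 2 := fun w =>
    orderOf_dvd_iff_pow_eq_one.mpr (Units.ext (by simpa using hu w w.isUnit))
  exact (Commute.of_orderOf_dvd_two hsq u v).units_val

theorem isReduced_of_isUnit_two_of_forall_sq_eq_one {R : Type*} [Ring R] (h2 : IsUnit (2 : R))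
    (hu : ∀ u : R, IsUnit u → u ^ 2 = 1) : IsReduced R where
  eq_zero q hq := by
    have four_mul : 2 * (2 * q) = 0 :=
      calc 2 * (2 * q) = (1 + q) ^ 2 - (1 - q) ^ 2 := by noncomm_ring
        _ = 0 := by rw [hu _ hq.isUnit_one_add, hu _ hq.isUnit_one_sub, sub_self]
    rwa [h2.mul_right_eq_zero, h2.mul_right_eq_zero] at four_mul

section Reduced

variable {R : Type*} [Ring R] [IsReduced R]

theorem mul_eq_zero_comm_of_isReduced {a b : R} (h : a * b = 0) : b * a = 0 :=
  IsReduced.eq_zero _ ⟨2, by rw [sq, mul_assoc, ← mul_assoc a, h, zero_mul, mul_zero]⟩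

theorem IsIdempotentElem.commute_of_isReduced {e : R} (he : IsIdempotentElem e) (x : R) :
    Commute e x := by
  have left : e * x * (1 - e) = 0 :=
    mul_eq_zero_comm_of_isReduced (by rw [← mul_assoc, sub_mul, one_mul, he.eq, sub_self, zero_mul])
  have right : (1 - e) * (x * e) = 0 :=
    mul_eq_zero_comm_of_isReduced (by rw [mul_assoc, mul_sub, mul_one, he.eq, sub_self, mul_zero])
  rw [mul_sub, mul_one, sub_eq_zero] at left
  rw [sub_mul, one_mul, sub_eq_zero] at right
  rw [Commute, SemiconjBy, left, right, mul_assoc]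

theorem IsWeaklyNilCleanElem.commute_of_isReduced {a : R} (ha : IsWeaklyNilCleanElem a) (x : R) :
    Commute a x := by
  obtain ⟨e, q, he, hq, rfl | rfl⟩ := ha <;>
    rw [IsReduced.eq_zero q hq]
  · simpa using he.commute_of_isReduced x
  · simpa using (he.commute_of_isReduced x).neg_left

end Reduced

theorem commutative_of_isGWNC_two_unit_units_sq_one {R : Type*} [Ring R]
    (h : IsGWNCRing R) (h2 : IsUnit (2 : R)) (hu : ∀ u : R, IsUnit u → u ^ 2 = 1) :
    ∀ x y : R, x * y = y * x := by
  have := isReduced_of_isUnit_two_of_forall_sq_eq_one h2 hu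
  intro x y
  by_cases hx : IsUnit x
  · by_cases hy : IsUnit y
    · exact Commute.of_isUnit_of_forall_sq_eq_one hu hx hy
    · exact ((h y hy).commute_of_isReduced x).symm
  · exact (h x hx).commute_of_isReduced y
end

section
/- Let R be a GWNC ring. Then the sum of any nilpotent element of R and any element of the Jacobson radical J(R) is nilpotent; that is, Nil(R) + J(R) = Nil(R). -/
open Pointwise

private lemma jac_mul_mem_right {R : Type*} [Ring R] {x : R} (y : R)
    (hx : x ∈ Ideal.jacobson (⊥ : Ideal R)) : x * y ∈ Ideal.jacobson (⊥ : Ideal R) :=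
  Ideal.mul_mem_right y _ hx

private lemma idem_mem_jac_eq_zero {R : Type*} [Ring R] {e : R} (he : IsIdempotentElem e)
    (hmem : e ∈ Ideal.jacobson (⊥ : Ideal R)) : e = 0 := by
  obtain ⟨z, hz⟩ := Ideal.mem_jacobson_iff.1 hmem (-1)
  rw [Ideal.mem_bot, sub_eq_zero] at hz
  -- z * (-1) * e + z = 1
  have h1 : z * (1 - e) = 1 := by
    have : z * (1 - e) = z * -1 * e + z := by noncomm_ring
    rw [this, hz]
  calc e = (z * (1 - e)) * e := by rw [h1, one_mul]
    _ = z * (e - e * e) := by noncomm_ring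
    _ = 0 := by rw [he.eq, sub_self, mul_zero]

/-- In a GWNC ring, every element of the Jacobson radical is nilpotent. -/
private lemma jac_nilpotent {R : Type*} [Ring R] (h : IsGWNCRing R) {j : R}
    (hj : j ∈ Ideal.jacobson (⊥ : Ideal R)) : IsNilpotent j := by
  by_cases hu : IsUnit j
  · have : Ideal.jacobson (⊥ : Ideal R) = ⊤ := Ideal.eq_top_of_isUnit_mem _ hj hu
    have hbot : (⊥ : Ideal R) = ⊤ := Ideal.jacobson_eq_top_iff.1 this
    have h10 : (1 : R) = 0 := by
      have : (1 : R) ∈ (⊥ : Ideal R) := hbot ▸ Submodule.mem_top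
      rwa [Ideal.mem_bot] at this
    exact ⟨1, by rw [pow_one, ← one_mul j, h10, zero_mul]⟩
  obtain ⟨e, q, he, hq, hcase⟩ := h j hu
  rcases hcase with hc | hc
  · -- j = q + e, e = j - q
    have key : q * (1 + q) ∈ Ideal.jacobson (⊥ : Ideal R) := by
      have hE : (j - q) * (j - q) = j - q := by
        have : e = j - q := by rw [hc]; noncomm_ring
        rw [← this]; exact he.eq
      have hz : q * (1 + q) - (j * (1 + q) + q * j - j * j) = 0 := by
        have expand : q * (1 + q) - (j * (1 + q) + q * j - j * j)
            = (j - q) * (j - q) - (j - q) := by noncomm_ring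
        rw [expand, hE, sub_self]
      rw [eq_of_sub_eq_zero hz]
      exact Submodule.sub_mem _
        (Submodule.add_mem _ (jac_mul_mem_right _ hj) (Ideal.mul_mem_left _ _ hj))
        (jac_mul_mem_right _ hj)
    have hqJ : q ∈ Ideal.jacobson (⊥ : Ideal R) := by
      obtain ⟨u, hu1⟩ := hq.isUnit_one_add
      have : q = (q * (1 + q)) * (↑u⁻¹ : R) := by
        rw [mul_assoc, ← hu1, u.mul_inv, mul_one]
      rw [this]; exact jac_mul_mem_right _ key
    have heJ : e ∈ Ideal.jacobson (⊥ : Ideal R) := by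
      have : e = j - q := by rw [hc]; noncomm_ring
      rw [this]; exact Submodule.sub_mem _ hj hqJ
    have : j = q := by rw [hc, idem_mem_jac_eq_zero he heJ, add_zero]
    rwa [this]
  · -- j = q - e, e = q - j
    have key : q * (q - 1) ∈ Ideal.jacobson (⊥ : Ideal R) := by
      have hE : (q - j) * (q - j) = q - j := by
        have : e = q - j := by rw [hc]; noncomm_ring
        rw [← this]; exact he.eq
      have hz : q * (q - 1) - (q * j + j * (q - 1) - j * j) = 0 := by
        have expand : q * (q - 1) - (q * j + j * (q - 1) - j * j)
            = (q - j) * (q - j) - (q - j) := by noncomm_ring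
        rw [expand, hE, sub_self]
      rw [eq_of_sub_eq_zero hz]
      exact Submodule.sub_mem _
        (Submodule.add_mem _ (Ideal.mul_mem_left _ _ hj) (jac_mul_mem_right _ hj))
        (jac_mul_mem_right _ hj)
    have hqJ : q ∈ Ideal.jacobson (⊥ : Ideal R) := by
      obtain ⟨u, hu1⟩ := hq.isUnit_sub_one
      have : q = (q * (q - 1)) * (↑u⁻¹ : R) := by
        rw [mul_assoc, ← hu1, u.mul_inv, mul_one]
      rw [this]; exact jac_mul_mem_right _ key
    have heJ : e ∈ Ideal.jacobson (⊥ : Ideal R) := by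
      have : e = q - j := by rw [hc]; noncomm_ring
      rw [this]; exact Submodule.sub_mem _ hqJ hj
    have : j = q := by rw [hc, idem_mem_jac_eq_zero he heJ, sub_zero]
    rwa [this]

theorem nil_add_jacobson_eq_nil_of_isGWNC {R : Type*} [Ring R] (h : IsGWNCRing R) :
    {x : R | IsNilpotent x} + (Ideal.jacobson (⊥ : Ideal R) : Set R)
      = {x : R | IsNilpotent x} := by
  ext x
  constructor
  · rintro ⟨q, hq, j, hj, rfl⟩
    obtain ⟨n, hn⟩ := hq
    -- (q + j)^k - q^k ∈ J for all k
    have key : ∀ k : ℕ, (q + j) ^ k - q ^ k ∈ Ideal.jacobson (⊥ : Ideal R) := by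
      intro k
      induction k with
      | zero => simp
      | succ k ih =>
        have : (q + j) ^ (k + 1) - q ^ (k + 1)
            = ((q + j) ^ k - q ^ k) * (q + j) + q ^ k * j := by
          rw [pow_succ, pow_succ]; noncomm_ring
        rw [this]
        exact Submodule.add_mem _ (jac_mul_mem_right _ ih) (Ideal.mul_mem_left _ _ hj)
    have hmem : (q + j) ^ n ∈ Ideal.jacobson (⊥ : Ideal R) := by
      have := key n
      rwa [hn, sub_zero] at this
    obtain ⟨m, hm⟩ := jac_nilpotent h hmem
    exact ⟨n * m, by rw [pow_mul, hm]⟩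
  · intro hx
    exact ⟨x, hx, 0, Submodule.zero_mem _, add_zero x⟩
end

section
/- Let R be a ring and I a two-sided ideal of R all of whose elements are nilpotent (a nil ideal). Then R is a GWNC ring if and only if the quotient ring R/I is a GWNC ring. -/
/-!
A surjection `f : R → S` with nil kernel preserves and reflects everything the GWNC property
is made of: idempotents lift along nil ideals, an element is nilpotent as soon as its image is,
and `a` is a unit as soon as `f a` is (a lift `b` of `(f a)⁻¹` makes `a * b` and `b * a`
unipotent, hence units). Apply this to `R → R ⧸ I`.
-/

theorem isUnit_of_isUnit_mul_of_isUnit_mul {M : Type*} [Monoid M] {a b : M}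
    (hab : IsUnit (a * b)) (hba : IsUnit (b * a)) : IsUnit a := by
  obtain ⟨c, hc⟩ := hab.exists_right_inv
  obtain ⟨d, hd⟩ := hba.exists_left_inv
  have hright : a * (b * c) = 1 := by rw [← mul_assoc, hc]
  have hleft : d * b * a = 1 := by rw [mul_assoc, hd]
  exact isUnit_iff_exists.mpr
    ⟨b * c, hright, left_inv_eq_right_inv hleft hright ▸ hleft⟩

section

variable {R S : Type*} [Ring R] [Ring S] (f : R →+* S)

theorem IsNilpotent.of_map_of_ker_isNilpotent (h : ∀ x ∈ RingHom.ker f, IsNilpotent x) {q : R}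
    (hq : IsNilpotent (f q)) : IsNilpotent q := by
  obtain ⟨n, hn⟩ := hq
  obtain ⟨m, hm⟩ := h (q ^ n) (by rw [RingHom.mem_ker, map_pow, hn])
  exact ⟨n * m, by rw [pow_mul, hm]⟩

theorem isUnit_of_map_eq_one_of_ker_isNilpotent (h : ∀ x ∈ RingHom.ker f, IsNilpotent x)
    {x : R} (hx : f x = 1) : IsUnit x := by
  have hnil : IsNilpotent (x - 1) := h _ (by rw [RingHom.mem_ker, map_sub, hx, map_one, sub_self])
  simpa using hnil.isUnit_one_add

theorem isUnit_of_isUnit_map_of_ker_isNilpotent (hf : Function.Surjective f)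
    (h : ∀ x ∈ RingHom.ker f, IsNilpotent x) {a : R} (ha : IsUnit (f a)) : IsUnit a := by
  obtain ⟨b, hb⟩ := hf ↑ha.unit⁻¹
  refine isUnit_of_isUnit_mul_of_isUnit_mul (b := b) ?_ ?_
  · exact isUnit_of_map_eq_one_of_ker_isNilpotent f h (by simp [hb])
  · exact isUnit_of_map_eq_one_of_ker_isNilpotent f h (by simp [hb])

theorem IsWeaklyNilCleanElem.map {a : R} (ha : IsWeaklyNilCleanElem a) :
    IsWeaklyNilCleanElem (f a) := by
  obtain ⟨e, q, he, hq, rfl | rfl⟩ := ha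
  · exact ⟨f e, f q, he.map f, hq.map f, Or.inl (map_add f q e)⟩
  · exact ⟨f e, f q, he.map f, hq.map f, Or.inr (map_sub f q e)⟩

theorem IsWeaklyNilCleanElem.of_map (hf : Function.Surjective f)
    (h : ∀ x ∈ RingHom.ker f, IsNilpotent x) {a : R} (ha : IsWeaklyNilCleanElem (f a)) :
    IsWeaklyNilCleanElem a := by
  obtain ⟨e₀, q₀, he₀, hq₀, hsum⟩ := ha
  obtain ⟨e, he, rfl⟩ := exists_isIdempotentElem_eq_of_ker_isNilpotent f h e₀ (hf e₀) he₀
  rcases hsum with hsum | hsum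
  · refine ⟨e, a - e, he, .of_map_of_ker_isNilpotent f h ?_, .inl (sub_add_cancel a e).symm⟩
    rwa [map_sub, hsum, add_sub_cancel_right]
  · refine ⟨e, a + e, he, .of_map_of_ker_isNilpotent f h ?_, .inr (add_sub_cancel_right a e).symm⟩
    rwa [map_add, hsum, sub_add_cancel]

theorem IsGWNCRing.of_surjective (hf : Function.Surjective f) (hR : IsGWNCRing R) :
    IsGWNCRing S := by
  intro x hx
  obtain ⟨a, rfl⟩ := hf x
  exact (hR a fun ha => hx (ha.map f)).map f

theorem IsGWNCRing.of_surjective_of_ker_isNilpotent (hf : Function.Surjective f)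
    (h : ∀ x ∈ RingHom.ker f, IsNilpotent x) (hS : IsGWNCRing S) : IsGWNCRing R := fun a ha =>
  .of_map f hf h (hS (f a) fun hfa => ha (isUnit_of_isUnit_map_of_ker_isNilpotent f hf h hfa))

end

/-- `R` is GWNC iff the quotient of `R` by a nil two-sided ideal `I` is GWNC. -/
theorem isGWNC_iff_quotient_nil_ideal {R : Type*} [Ring R] (I : TwoSidedIdeal R)
    (hI : ∀ x ∈ I, IsNilpotent x) :
    IsGWNCRing R ↔ IsGWNCRing I.ringCon.Quotient := by
  have hker : ∀ x ∈ RingHom.ker I.ringCon.mk', IsNilpotent x := fun x hx =>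
    hI x (I.ker_ringCon_mk' ▸ TwoSidedIdeal.mem_ker _ |>.mpr (RingHom.mem_ker.mp hx))
  exact ⟨.of_surjective _ I.ringCon.mk'_surjective,
    .of_surjective_of_ker_isNilpotent _ I.ringCon.mk'_surjective hker⟩
end

section
/- Let R be a ring whose only idempotents are 0 and 1. Then R is a GWNC ring if and only if R is a local ring whose Jacobson radical J(R) is nil. -/
theorem IsNilpotent.subsingleton_of_mul_eq_one {M : Type*} [MonoidWithZero M] {a s : M}
    (ha : IsNilpotent a) (hs : s * a = 1) : Subsingleton M := by
  obtain ⟨n, hn⟩ := ha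
  have := (isLeftRegular_of_mul_eq_one hs).pow n
  rwa [hn, isLeftRegular_zero_iff_subsingleton] at this

namespace Ideal

variable {R : Type*} [Ring R]

theorem mem_jacobson_bot_of_forall_isUnit_one_add_mul {x : R}
    (h : ∀ y, IsUnit (1 + y * x)) : x ∈ jacobson (⊥ : Ideal R) := by
  refine mem_jacobson_iff.mpr fun y ↦ ?_
  obtain ⟨u, hu⟩ := h y
  refine ⟨↑u⁻¹, (Submodule.mem_bot R).mpr ?_⟩
  have : (↑u⁻¹ : R) * (1 + y * x) = 1 := by rw [← hu, Units.inv_mul]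
  rw [mul_add, mul_one] at this
  rw [mul_assoc, add_comm, this, sub_self]

theorem subsingleton_of_isUnit_mem_jacobson_bot {x : R} (hu : IsUnit x)
    (hx : x ∈ jacobson (⊥ : Ideal R)) : Subsingleton R :=
  (Submodule.subsingleton_iff R).mp <|
    subsingleton_of_bot_eq_top (jacobson_eq_top_iff.mp (eq_top_of_isUnit_mem _ hx hu))

end Ideal

section NonunitsNilpotent

variable {R : Type*} [Ring R]

theorem mem_jacobson_bot_of_forall_not_isUnit_isNilpotent
    (h : ∀ a : R, ¬IsUnit a → IsNilpotent a) {a : R} (ha : ¬IsUnit a) :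
    a ∈ Ideal.jacobson (⊥ : Ideal R) := by
  refine Ideal.mem_jacobson_bot_of_forall_isUnit_one_add_mul fun y ↦ ?_
  suffices hya : ¬IsUnit (y * a) from (h _ hya).isUnit_one_add
  rintro ⟨u, hu⟩
  have hleft : (↑u⁻¹ * y) * a = 1 := by rw [mul_assoc, ← hu, Units.inv_mul]
  have := (h a ha).subsingleton_of_mul_eq_one hleft
  exact ha (isUnit_of_subsingleton a)

theorem forall_isUnit_or_mem_jacobson_and_nil_iff :
    ((∀ a : R, IsUnit a ∨ a ∈ Ideal.jacobson (⊥ : Ideal R)) ∧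
        ∀ x ∈ Ideal.jacobson (⊥ : Ideal R), IsNilpotent x) ↔
      ∀ a : R, ¬IsUnit a → IsNilpotent a := by
  constructor
  · rintro ⟨hlocal, hnil⟩ a ha
    exact hnil a ((hlocal a).resolve_left ha)
  · intro h
    refine ⟨fun a ↦ or_iff_not_imp_left.mpr (mem_jacobson_bot_of_forall_not_isUnit_isNilpotent h),
      fun x hx ↦ ?_⟩
    by_cases hu : IsUnit x
    · have := Ideal.subsingleton_of_isUnit_mem_jacobson_bot hu hx
      exact isNilpotent_of_subsingleton
    · exact h x hu

end NonunitsNilpotent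

section TrivialIdempotents

variable {R : Type*} [Ring R]

theorem IsWeaklyNilCleanElem.of_isNilpotent {a : R} (ha : IsNilpotent a) :
    IsWeaklyNilCleanElem a :=
  ⟨0, a, .zero, ha, .inl (add_zero a).symm⟩

theorem IsWeaklyNilCleanElem.isNilpotent_of_not_isUnit
    (hid : ∀ e : R, IsIdempotentElem e → e = 0 ∨ e = 1) {a : R} (ha : IsWeaklyNilCleanElem a)
    (hu : ¬IsUnit a) : IsNilpotent a := by
  obtain ⟨e, q, he, hq, rfl | rfl⟩ := ha <;> rcases hid e he with rfl | rfl
  · simpa using hq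
  · exact absurd hq.isUnit_add_one hu
  · simpa using hq
  · exact absurd hq.isUnit_sub_one hu

theorem isGWNCRing_iff_forall_not_isUnit_isNilpotent
    (hid : ∀ e : R, IsIdempotentElem e → e = 0 ∨ e = 1) :
    IsGWNCRing R ↔ ∀ a : R, ¬IsUnit a → IsNilpotent a :=
  ⟨fun hG a ha ↦ (hG a ha).isNilpotent_of_not_isUnit hid ha,
    fun h a ha ↦ .of_isNilpotent (h a ha)⟩

end TrivialIdempotents

theorem isGWNC_iff_local_jacobson_nil_of_trivial_idempotents {R : Type*} [Ring R]
    (hid : ∀ e : R, IsIdempotentElem e → e = 0 ∨ e = 1) :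
    IsGWNCRing R ↔
      ((∀ a : R, IsUnit a ∨ a ∈ Ideal.jacobson (⊥ : Ideal R)) ∧
        ∀ x ∈ Ideal.jacobson (⊥ : Ideal R), IsNilpotent x) := by
  rw [isGWNCRing_iff_forall_not_isUnit_isNilpotent hid, forall_isUnit_or_mem_jacobson_and_nil_iff]
end

section
/- Let R be a ring such that 2 belongs to the Jacobson radical J(R). Then R is a GWNC ring if and only if R is a GNC ring. -/
/-- A ring is GNC if every non-unit is the sum of an idempotent and a nilpotent. -/
def IsGNCRing (R : Type*) [Ring R] : Prop :=
  ∀ a : R, ¬IsUnit a → ∃ e q : R, IsIdempotentElem e ∧ IsNilpotent q ∧ a = q + e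

namespace Ideal

variable {R : Type*} [Ring R] {x : R}

theorem exists_mul_one_add_eq_one_of_mem_jacobson_bot (hx : x ∈ jacobson (⊥ : Ideal R)) :
    ∃ z, z * (1 + x) = 1 := by
  obtain ⟨z, hz⟩ := mem_jacobson_iff.mp hx 1
  rw [mem_bot, mul_one, sub_eq_zero] at hz
  exact ⟨z, by rw [mul_one_add, add_comm, hz]⟩

theorem isUnit_one_add_of_mem_jacobson_bot (hx : x ∈ jacobson (⊥ : Ideal R)) :
    IsUnit (1 + x) := by
  obtain ⟨z, hz⟩ := exists_mul_one_add_eq_one_of_mem_jacobson_bot hx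
  -- `z = 1 - z * x` is again of the form `1 + J(R)`, so it has a left inverse too.
  have hz_eq : 1 + -(z * x) = z := by rw [← hz]; noncomm_ring
  obtain ⟨w, hw⟩ := exists_mul_one_add_eq_one_of_mem_jacobson_bot
    (neg_mem (mul_mem_left _ z hx))
  rw [hz_eq] at hw
  have hw_eq : w = 1 + x := left_inv_eq_right_inv hw hz
  exact ⟨⟨1 + x, z, hw_eq ▸ hw, hz⟩, rfl⟩

theorem not_isUnit_of_mem_jacobson_bot [Nontrivial R] (hx : x ∈ jacobson (⊥ : Ideal R)) :
    ¬IsUnit x := fun hu =>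
  bot_ne_top (jacobson_eq_top_iff.mp (eq_top_of_isUnit_mem _ hx hu))

end Ideal

theorem IsNilpotent.add_mul_of_forall_commute {R : Type*} [Ring R] {q z : R}
    (hq : IsNilpotent q) (hz : IsNilpotent z) (hz_comm : ∀ y, Commute z y) (c : R) :
    IsNilpotent (q + z * c) := by
  have hpow : ∀ k : ℕ, ∃ r, (q + z * c) ^ k = q ^ k + z * r := by
    intro k
    induction k with
    | zero => exact ⟨0, by simp⟩
    | succ k ih =>
      obtain ⟨r, hr⟩ := ih
      refine ⟨q ^ k * c + r * q + r * (z * c), ?_⟩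
      have hzq : q ^ k * z = z * q ^ k := ((hz_comm _).eq).symm
      rw [_root_.pow_succ, _root_.pow_succ, hr]
      simp only [mul_add, add_mul, mul_assoc]
      rw [← mul_assoc (q ^ k) z c, hzq, mul_assoc]
      abel
  obtain ⟨n, hn⟩ := hq
  obtain ⟨m, hm⟩ := hz
  obtain ⟨r, hr⟩ := hpow n
  refine ⟨n * m, ?_⟩
  rw [pow_mul, hr, hn, zero_add, (hz_comm r).mul_pow, hm, zero_mul]

section

variable {R : Type*} [Ring R]

theorem IsIdempotentElem.eq_zero_of_isUnit_one_sub {e : R} (he : IsIdempotentElem e)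
    (hu : IsUnit (1 - e)) : e = 0 :=
  sub_eq_self.mp ((IsIdempotentElem.iff_eq_one_of_isUnit hu).mp he.one_sub)

theorem isNilpotent_two_of_isWeaklyNilCleanElem (h2 : (2 : R) ∈ Ideal.jacobson (⊥ : Ideal R))
    (hw : IsWeaklyNilCleanElem (2 : R)) : IsNilpotent (2 : R) := by
  obtain ⟨e, q, he, hq, h | h⟩ := hw
  · have h1e : 1 - e = q - 1 := by
      rw [← one_add_one_eq_two] at h
      rw [eq_sub_of_add_eq' h.symm]
      abel
    have he0 : e = 0 := he.eq_zero_of_isUnit_one_sub (h1e ▸ hq.isUnit_sub_one)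
    rwa [h, he0, add_zero]
  · have h1e : 1 - e = (1 + 2) + -q := by rw [h]; abel
    have he0 : e = 0 := he.eq_zero_of_isUnit_one_sub <| h1e ▸
      hq.neg.isUnit_add_left_of_commute (Ideal.isUnit_one_add_of_mem_jacobson_bot h2)
        ((Commute.one_right q).add_right (Commute.ofNat_right q 2)).neg_left
    rwa [h, he0, sub_zero]

theorem IsWeaklyNilCleanElem.exists_add_of_isNilpotent_two (h2 : IsNilpotent (2 : R)) {a : R}
    (ha : IsWeaklyNilCleanElem a) :
    ∃ e q : R, IsIdempotentElem e ∧ IsNilpotent q ∧ a = q + e := by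
  obtain ⟨e, q, he, hq, h | h⟩ := ha
  · exact ⟨e, q, he, hq, h⟩
  · refine ⟨e, q + 2 * -e, he, hq.add_mul_of_forall_commute h2 (Commute.ofNat_left 2) _, ?_⟩
    rw [h]
    noncomm_ring

end

theorem isGWNC_iff_isGNC_of_two_mem_jacobson {R : Type*} [Ring R]
    (h2 : (2 : R) ∈ Ideal.jacobson (⊥ : Ideal R)) :
    IsGWNCRing R ↔ IsGNCRing R := by
  refine ⟨fun hW a ha => ?_, fun hG a ha => ?_⟩
  · have : Nontrivial R :=
      not_subsingleton_iff_nontrivial.mp fun _ => ha (isUnit_of_subsingleton a)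
    have h2_nil : IsNilpotent (2 : R) :=
      isNilpotent_two_of_isWeaklyNilCleanElem h2 (hW 2 (Ideal.not_isUnit_of_mem_jacobson_bot h2))
    exact (hW a ha).exists_add_of_isNilpotent_two h2_nil
  · obtain ⟨e, q, he, hq, h⟩ := hG a ha
    exact ⟨e, q, he, hq, .inl h⟩
end

section
/- A ring R is strongly nil-clean if and only if R is a GWNC ring and R is a UU ring. -/
/-- A ring is strongly nil-clean if every element is the sum of an idempotent and a
commuting nilpotent. -/
def IsStronglyNilCleanRing (R : Type*) [Ring R] : Prop :=
  ∀ a : R, ∃ e q : R, IsIdempotentElem e ∧ IsNilpotent q ∧ e * q = q * e ∧ a = e + q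

/-- A ring is UU if every unit is unipotent. -/
def IsUURing (R : Type*) [Ring R] : Prop :=
  ∀ u : R, IsUnit u → ∃ q : R, IsNilpotent q ∧ u = 1 + q

-- commutative case: a - a^2 nilpotent gives idempotent + nilpotent decomposition
lemma comm_split {A : Type*} [CommRing A] (a : A) (h : IsNilpotent (a - a * a)) :
    ∃ e q : A, IsIdempotentElem e ∧ IsNilpotent q ∧ a = e + q := by
  obtain ⟨n, hn⟩ := h
  rcases n with _ | m
  · -- n = 0 : ring is trivial
    refine ⟨0, a, ?_, ⟨0, ?_⟩, by simp⟩
    · have h1 : (1 : A) = 0 := by simpa using hn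
      simp [IsIdempotentElem]
    · have h1 : (1 : A) = 0 := by simpa using hn
      calc a ^ 0 = 1 := pow_zero a
      _ = 0 := h1
  · have hn2 : a ^ (m+1) * (1 - a) ^ (m+1) = 0 := by
      rw [← mul_pow, show a * (1 - a) = a - a * a from by ring]; exact hn
    have hcop : IsCoprime (a ^ (m+1)) ((1 - a) ^ (m+1)) := by
      refine IsCoprime.pow ?_
      exact ⟨1, 1, by ring⟩
    obtain ⟨u, v, huv⟩ := hcop
    refine ⟨u * a ^ (m+1), a - u * a ^ (m+1), ?_, ?_, by ring⟩
    · show u * a ^ (m+1) * (u * a ^ (m+1)) = u * a ^ (m+1)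
      linear_combination (u * a ^ (m+1)) * huv - (u * v) * hn2
    · have hA : IsNilpotent ((a - a * a) * (v * (1 - a) ^ m)) := by
        exact ⟨m+1, by rw [mul_pow, hn, zero_mul]⟩
      have hB : IsNilpotent (-((a - a * a) * (u * a ^ m))) := by
        refine IsNilpotent.neg ⟨m+1, by rw [mul_pow, hn, zero_mul]⟩
      have heq : a - u * a ^ (m+1) = (a - a * a) * (v * (1 - a) ^ m) + -((a - a * a) * (u * a ^ m)) := by
        linear_combination (-a) * huv
      rw [heq]
      exact Commute.isNilpotent_add (mul_comm _ _) hA hB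

open Polynomial in
lemma strongly_split {R : Type*} [Ring R] (a : R) (h : IsNilpotent (a - a * a)) :
    ∃ e q : R, IsIdempotentElem e ∧ IsNilpotent q ∧ e * q = q * e ∧ a = e + q := by
  obtain ⟨n, hn⟩ := h
  set I : Ideal (Polynomial ℤ) := Ideal.span {(X - X * X) ^ n} with hI
  let mk := Ideal.Quotient.mk I
  have hXnil : IsNilpotent (mk X - mk X * mk X) := by
    refine ⟨n, ?_⟩
    rw [← map_mul, ← map_sub, ← map_pow]
    rw [Ideal.Quotient.eq_zero_iff_mem]
    exact Ideal.subset_span rfl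
  obtain ⟨e0, q0, he0, hq0, heq0⟩ := comm_split (mk X) hXnil
  obtain ⟨P, rfl⟩ := Ideal.Quotient.mk_surjective e0
  have φdef : ∀ p : Polynomial ℤ, True := fun _ => trivial
  set φ : Polynomial ℤ →ₐ[ℤ] R := Polynomial.aeval a with hφ
  have hφX : φ X = a := aeval_X a
  have hkill : ∀ p : Polynomial ℤ, p ∈ I → φ p = 0 := by
    intro p hp
    rw [hI, Ideal.mem_span_singleton] at hp
    obtain ⟨w, rfl⟩ := hp
    rw [map_mul, map_pow, map_sub, map_mul, hφX, hn, zero_mul]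
  have hidem : IsIdempotentElem (φ P) := by
    have h1 : mk (P * P - P) = 0 := by
      rw [map_sub, map_mul]
      rw [he0.eq]
      exact sub_self _
    rw [Ideal.Quotient.eq_zero_iff_mem] at h1
    have := hkill _ h1
    rw [map_sub, map_mul] at this
    show φ P * φ P = φ P
    exact sub_eq_zero.mp this
  have hq0' : q0 = mk (X - P) := by rw [map_sub]; rw [heq0]; abel
  obtain ⟨k, hk⟩ := hq0
  have hknil : (a - φ P) ^ k = 0 := by
    rw [hq0'] at hk
    have hmem : (X - P) ^ k ∈ I := by
      rw [← Ideal.Quotient.eq_zero_iff_mem, map_pow]; exact hk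
    have := hkill _ hmem
    rw [map_pow, map_sub, hφX] at this
    exact this
  refine ⟨φ P, a - φ P, hidem, ⟨k, hknil⟩, ?_, by abel⟩
  have hcomm : φ P * a = a * φ P := by
    rw [← hφX, ← map_mul, mul_comm, map_mul]
  rw [mul_sub, sub_mul, hcomm]

-- every element decomposes as nilpotent plus-or-minus idempotent
lemma exists_decomp {S : Type*} [Ring S] (hG : IsGWNCRing S) (hU : IsUURing S) (a : S) :
    ∃ e p : S, IsIdempotentElem e ∧ IsNilpotent p ∧ (a = p + e ∨ a = p - e) := by
  by_cases h : IsUnit a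
  · obtain ⟨q, hq, ha⟩ := hU a h
    exact ⟨1, q, IsIdempotentElem.one, hq, Or.inl (by rw [ha, add_comm])⟩
  · obtain ⟨e, q, he, hq, hd⟩ := hG a h
    exact ⟨e, q, he, hq, hd⟩

-- Core lemma: in a GWNC + UU ring, s^2 = 0 implies s*y is nilpotent.
lemma core_nil {S : Type*} [Ring S] (hG : IsGWNCRing S) (hU : IsUURing S)
    (s y : S) (hs : s * s = 0) : IsNilpotent (s * y) := by
  set a := s * y with ha
  obtain ⟨e, p, he, hp, hd⟩ := exists_decomp hG hU a
  -- find a unit w and t with w * e * w⁻¹ = s * t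
  obtain ⟨w, t, hwt⟩ : ∃ (w : Sˣ) (t : S), (w : S) * e * (↑w⁻¹ : S) = s * t := by
    rcases hd with h1 | h1
    · have hw : IsUnit (1 + p) := hp.isUnit_one_add
      refine ⟨hw.unit, y * e * (↑hw.unit⁻¹ : S), ?_⟩
      have h2 : (hw.unit : S) = 1 + p := hw.unit_spec
      have h3 : (1 + p) * e = a * e := by
        rw [h1]; rw [add_mul, add_mul, he.eq, one_mul]; abel
      rw [h2, h3, ha]
      noncomm_ring
    · have hw : IsUnit (1 - p) := hp.isUnit_one_sub
      refine ⟨hw.unit, -(y * e * (↑hw.unit⁻¹ : S)), ?_⟩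
      have h2 : (hw.unit : S) = 1 - p := hw.unit_spec
      have h3 : (1 - p) * e = -(a * e) := by
        rw [h1]; rw [sub_mul, sub_mul, he.eq, one_mul]; abel
      rw [h2, h3, ha]
      noncomm_ring
  set f : S := (w : S) * e * (↑w⁻¹ : S) with hf
  have hff : f * f = f := by
    rw [hf]
    calc (w : S) * e * ↑w⁻¹ * ((w : S) * e * ↑w⁻¹)
        = (w : S) * (e * ((↑w⁻¹ * w) * e)) * ↑w⁻¹ := by noncomm_ring
    _ = (w : S) * (e * e) * ↑w⁻¹ := by rw [w.inv_mul, one_mul]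
    _ = (w : S) * e * ↑w⁻¹ := by rw [he.eq]
  have hsf : s * f = 0 := by rw [hwt, ← mul_assoc, hs, zero_mul]
  have hst : s * t = f := hwt.symm
  have h10 : f * (1 - f) = 0 := by rw [mul_sub, mul_one, hff, sub_self]
  -- matrix units
  set β : S := f * s with hβ
  set γ : S := (1 - f) * t * f with hγ
  set g : S := γ * β with hg
  clear_value f β γ g
  -- the sixteen relations
  have rff : f * f = f := hff
  have rβf : β * f = 0 := by
    calc β * f = f * (s * f) := by rw [hβ]; noncomm_ring
    _ = 0 := by rw [hsf, mul_zero]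
  have rfβ : f * β = β := by rw [hβ, ← mul_assoc, hff]
  have rββ : β * β = 0 := by
    calc β * β = f * (s * f) * s := by rw [hβ]; noncomm_ring
    _ = 0 := by rw [hsf, mul_zero, zero_mul]
  have rfγ : f * γ = 0 := by
    calc f * γ = (f * (1 - f)) * (t * f) := by rw [hγ]; noncomm_ring
    _ = 0 := by rw [h10, zero_mul]
  have rγf : γ * f = γ := by
    calc γ * f = (1 - f) * t * (f * f) := by rw [hγ]; noncomm_ring
    _ = γ := by rw [hff, hγ]
  have rγγ : γ * γ = 0 := by
    calc γ * γ = (1-f) * t * (f * (1-f)) * (t * f) := by rw [hγ]; noncomm_ring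
    _ = 0 := by rw [h10, mul_zero, zero_mul]
  have rβγ : β * γ = f := by
    calc β * γ = f * (s * t) * f - f * (s * f) * (t * f) := by rw [hβ, hγ]; noncomm_ring
    _ = f := by rw [hsf, hst, mul_zero, zero_mul, sub_zero, hff, hff]
  have rγβ : γ * β = g := hg.symm
  have rgf : g * f = 0 := by rw [hg, mul_assoc, rβf, mul_zero]
  have rfg : f * g = 0 := by rw [hg, ← mul_assoc, rfγ, zero_mul]
  have rgβ : g * β = 0 := by rw [hg, mul_assoc, rββ, mul_zero]
  have rβg : β * g = β := by rw [hg, ← mul_assoc, rβγ, rfβ]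
  have rgγ : g * γ = γ := by rw [hg, mul_assoc, rβγ, rγf]
  have rγg : γ * g = 0 := by rw [hg, ← mul_assoc, rγγ, zero_mul]
  have rgg : g * g = g := by rw [hg, mul_assoc, ← mul_assoc β γ β, rβγ, rfβ]
  -- ν and its inverse partner
  set ν : S := β + γ - f with hν
  set ω : S := β + γ - f - f - g with hω
  clear_value ν ω
  have hνω : (1 + ν) * (1 + ω) = 1 := by
    have expand : (1 + ν) * (1 + ω) = 1 + ν + ω + ν * ω := by noncomm_ring
    have hprod : ν * ω = f + f + f + g - β - β - γ - γ := by
      rw [hν, hω]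
      simp only [mul_add, add_mul, mul_sub, sub_mul, rββ, rβγ, rβf, rβg, rγβ, rγγ, rγf, rγg,
        rfβ, rfγ, rff, rfg, rgβ, rgγ, rgf, rgg]
      abel
    rw [expand, hprod, hν, hω]; abel
  have hων : (1 + ω) * (1 + ν) = 1 := by
    have expand : (1 + ω) * (1 + ν) = 1 + ω + ν + ω * ν := by noncomm_ring
    have hprod : ω * ν = f + f + f + g - β - β - γ - γ := by
      rw [hν, hω]
      simp only [mul_add, add_mul, mul_sub, sub_mul, rββ, rβγ, rβf, rβg, rγβ, rγγ, rγf, rγg,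
        rfβ, rfγ, rff, rfg, rgβ, rgγ, rgf, rgg]
      abel
    rw [expand, hprod, hν, hω]; abel
  have hunit : IsUnit (1 + ν) := ⟨⟨1 + ν, 1 + ω, hνω, hων⟩, rfl⟩
  obtain ⟨ν', hν'nil, hν'eq⟩ := hU _ hunit
  have hνnil : IsNilpotent ν := by
    have h := add_left_cancel hν'eq
    rwa [← h] at hν'nil
  -- structure constants
  have hfgν : (f + g) * ν = ν := by
    rw [hν]
    simp only [mul_add, add_mul, mul_sub, sub_mul, rfβ, rfγ, rff, rfg, rgβ, rgγ, rgf, rgg]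
    abel
  have hνsq : ν * ν = (f + g) - ν := by
    rw [hν]
    simp only [mul_add, add_mul, mul_sub, sub_mul, rββ, rβγ, rβf, rβg, rγβ, rγγ, rγf, rγg,
      rfβ, rfγ, rff, rfg]
    abel
  have hfν : f * ν = β - f := by
    rw [hν, mul_sub, mul_add, rfβ, rfγ, add_zero, rff]
  have t1 : f * (f + g) * f = f := by rw [mul_add, rff, rfg, add_zero, rff]
  have t2 : f * ν * f = -f := by rw [hfν, sub_mul, rβf, rff, zero_sub]
  have t3 : f * (f + g) * g = 0 := by rw [mul_add, rff, rfg, add_zero, rfg]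
  have t4 : f * ν * g = β := by rw [hfν, sub_mul, rβg, rfg, sub_zero]
  -- the integer sequence
  let c : ℕ → ℤ × ℤ := fun k => Nat.rec ((0 : ℤ), (1 : ℤ)) (fun _ p => (p.2, p.1 - p.2)) k
  have hcs : ∀ k, c (k + 1) = ((c k).2, (c k).1 - (c k).2) := fun k => rfl
  have hpow : ∀ k, ν ^ (k + 1) = (c k).1 • (f + g) + (c k).2 • ν := by
    intro k; induction k with
    | zero =>
      show ν ^ 1 = (0 : ℤ) • (f + g) + (1 : ℤ) • ν
      rw [pow_one, zero_smul, one_smul, zero_add]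
    | succ k ih =>
      rw [pow_succ, ih, add_mul, smul_mul_assoc, smul_mul_assoc, hfgν, hνsq, hcs]
      rw [smul_sub, sub_smul]
      abel
  have hbez : ∀ k, ∃ x y : ℤ, x * (c k).1 + y * (c k).2 = 1 := by
    intro k; induction k with
    | zero =>
      refine ⟨1, 1, ?_⟩
      have hc0 : c 0 = ((0 : ℤ), (1 : ℤ)) := rfl
      rw [hc0]
      norm_num
    | succ k ih =>
      obtain ⟨x, y, h⟩ := ih
      refine ⟨x + y, x, ?_⟩
      rw [hcs]
      ring_nf
      linarith [h]
  obtain ⟨n, hνn⟩ := hνnil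
  have hf0 : f = 0 := by
    rcases n with _ | m
    · have h1 : (1 : S) = 0 := by simpa using hνn
      calc f = f * 1 := (mul_one f).symm
      _ = 0 := by rw [h1, mul_zero]
    · have key : (c m).1 • (f + g) + (c m).2 • ν = 0 := by rw [← hpow m, hνn]
      set A := (c m).1 with hA
      set B := (c m).2 with hB
      have e1 : A • f + B • (-f) = 0 := by
        have h5 : f * (A • (f + g) + B • ν) * f = f * 0 * f := by rw [key]
        rw [mul_zero, zero_mul] at h5
        rw [mul_add, mul_smul_comm, mul_smul_comm, add_mul, smul_mul_assoc, smul_mul_assoc,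
          t1, t2] at h5
        exact h5
      have e2 : B • β = 0 := by
        have h5 : f * (A • (f + g) + B • ν) * g = f * 0 * g := by rw [key]
        rw [mul_zero, zero_mul] at h5
        rw [mul_add, mul_smul_comm, mul_smul_comm, add_mul, smul_mul_assoc, smul_mul_assoc,
          t3, t4, smul_zero, zero_add] at h5
        exact h5
      have e3 : B • f = 0 := by
        have h5 : (B • β) * γ = 0 := by rw [e2, zero_mul]
        rwa [smul_mul_assoc, rβγ] at h5
      have e4 : A • f = 0 := by
        have h5 : A • f + B • (-f) = A • f - B • f := by rw [smul_neg]; abel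
        rw [h5, e3, sub_zero] at e1
        exact e1
      obtain ⟨x, y, hxy⟩ := hbez m
      calc f = (1 : ℤ) • f := (one_smul ℤ f).symm
      _ = (x * A + y * B) • f := by rw [hxy]
      _ = x • (A • f) + y • (B • f) := by rw [add_smul, mul_smul, mul_smul]
      _ = 0 := by rw [e3, e4, smul_zero, smul_zero, add_zero]
  have he0 : e = 0 := by
    have h5 : (↑w⁻¹ : S) * f * (w : S) = e := by
      rw [hf]
      calc (↑w⁻¹ : S) * ((w : S) * e * ↑w⁻¹) * (w : S)
          = ((↑w⁻¹ : S) * (w : S)) * e * ((↑w⁻¹ : S) * (w : S)) := by noncomm_ring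
      _ = e := by rw [w.inv_mul, one_mul, mul_one]
    rw [← h5, hf0, mul_zero, zero_mul]
  rcases hd with h1 | h1
  · have hap : a = p := by rw [h1, he0, add_zero]
    rw [hap]
    exact hp
  · have hap : a = p := by rw [h1, he0, sub_zero]
    rw [hap]
    exact hp

theorem GWNC_forward_aux {R : Type*} [Ring R] (h : IsStronglyNilCleanRing R) :
    IsGWNCRing R ∧ IsUURing R := by
  constructor
  · intro a _
    obtain ⟨e, q, he, hq, _, ha⟩ := h a
    exact ⟨e, q, he, hq, Or.inl (by rw [ha, add_comm])⟩
  · intro u hu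
    obtain ⟨e, q, he, hq, hc, ha⟩ := h u
    have hcu : Commute q u := by
      show q * u = u * q
      rw [ha, mul_add, add_mul, hc]
    have heu : IsUnit e := by
      have h1 : e = -q + u := by rw [ha]; abel
      rw [h1]
      exact hq.neg.isUnit_add_right_of_commute hu hcu.neg_left
    have he1 : e = 1 := by
      obtain ⟨b, hb⟩ := isUnit_iff_exists.mp heu
      calc e = 1 * e := (one_mul e).symm
      _ = (b * e) * e := by rw [hb.2]
      _ = b * (e * e) := by rw [mul_assoc]
      _ = b * e := by rw [he.eq]
      _ = 1 := hb.2
    exact ⟨q, hq, by rw [ha, he1]⟩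

-- Jacobson swap
lemma unit_swap {R : Type*} [Ring R] {x y : R} (h : IsUnit (1 - x * y)) :
    IsUnit (1 - y * x) := by
  obtain ⟨u, hu1, hu2⟩ := isUnit_iff_exists.mp h
  have h4 : u - x * y * u = 1 := by rw [← hu1]; noncomm_ring
  have h5 : u - u * (x * y) = 1 := by rw [← hu2]; noncomm_ring
  refine isUnit_iff_exists.mpr ⟨1 + y * u * x, ?_, ?_⟩
  · calc (1 - y * x) * (1 + y * u * x)
        = 1 + y * ((u - x * y * u) - 1) * x := by noncomm_ring
    _ = 1 := by rw [h4, sub_self, mul_zero, zero_mul, add_zero]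
  · calc (1 + y * u * x) * (1 - y * x)
        = 1 + y * ((u - u * (x * y)) - 1) * x := by noncomm_ring
    _ = 1 := by rw [h5, sub_self, mul_zero, zero_mul, add_zero]

theorem GWNC_backward_aux {R : Type*} [Ring R] (hG : IsGWNCRing R) (hU : IsUURing R) :
    IsStronglyNilCleanRing R := by
  classical
  set K : R → Prop := fun x => ∀ y, IsUnit (1 - x * y) with hK
  have K_nil : ∀ x, K x → IsNilpotent x := by
    intro x hx
    obtain ⟨q, hq, h1⟩ := hU _ (hx 1)
    rw [mul_one, sub_eq_add_neg] at h1
    have h2 : x = -q := by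
      have h3 := add_left_cancel h1
      rw [← h3, neg_neg]
    rw [h2]
    exact hq.neg
  have K_zero : K 0 := by intro y; rw [zero_mul, sub_zero]; exact isUnit_one
  have K_neg : ∀ x, K x → K (-x) := by
    intro x hx y
    have h1 := hx (-y)
    rwa [mul_neg, sub_neg_eq_add, ← sub_neg_eq_add, ← neg_mul] at h1
  have K_mul_right : ∀ x r, K x → K (x * r) := by
    intro x r hx y
    rw [mul_assoc]
    exact hx (r * y)
  have K_mul_left : ∀ x r, K x → K (r * x) := by
    intro x r hx y
    have h1 : IsUnit (1 - x * (y * r)) := hx (y * r)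
    rw [← mul_assoc] at h1
    have h2 := unit_swap h1
    rwa [← mul_assoc] at h2
  have K_add : ∀ x z, K x → K z → K (x + z) := by
    intro x z hx hz y
    obtain ⟨u, hu1, hu2⟩ := isUnit_iff_exists.mp (hx y)
    have h1 : IsUnit (1 - z * (y * u)) := hz (y * u)
    rw [← mul_assoc] at h1
    have h3 : IsUnit (1 - u * (z * y)) := unit_swap h1
    have h5 : (1 - x * y) * (1 - u * (z * y)) = 1 - (x + z) * y := by
      have h6 : (1 - x * y) * (1 - u * (z * y))
          = (1 - x * y) - ((1 - x * y) * u) * (z * y) := by noncomm_ring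
      rw [h6, hu1]
      noncomm_ring
    rw [← h5]
    exact (hx y).mul h3
  -- the congruence by K
  let c : RingCon R :=
    ⟨⟨⟨fun x z => K (x - z),
      ⟨fun x => by simpa using K_zero,
       fun {x z} h => by have := K_neg _ h; rwa [neg_sub] at this,
       fun {x y z} h h' => by have := K_add _ _ h h'; rwa [sub_add_sub_cancel] at this⟩⟩,
      fun {w x y z} h1 h2 => by
        have h3 := K_add _ _ (K_mul_left _ w h2) (K_mul_right _ z h1)
        have h4 : w * (y - z) + (w - x) * z = w * y - x * z := by noncomm_ring
        rwa [h4] at h3⟩,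
      fun {w x y z} h1 h2 => by
        have h3 := K_add _ _ h1 h2
        have h4 : w - x + (y - z) = w + y - (x + z) := by noncomm_ring
        rwa [h4] at h3⟩
  have hQ : ∀ x z : R, ((x : c.Quotient) = (z : c.Quotient)) ↔ K (x - z) := by
    intro x z
    exact (RingCon.eq c).trans Iff.rfl
  have hsurj : ∀ v : c.Quotient, ∃ b : R, (b : c.Quotient) = v := fun v => Quot.exists_rep v
  have hzero : ∀ x : R, ((x : c.Quotient) = 0) ↔ K x := by
    intro x
    rw [← RingCon.coe_zero]
    rw [hQ x 0, sub_zero]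
  have hlift : ∀ x : R, IsUnit ((x : c.Quotient)) → IsUnit x := by
    intro x hx
    obtain ⟨v, hv1, hv2⟩ := isUnit_iff_exists.mp hx
    obtain ⟨b, rfl⟩ := hsurj v
    rw [← RingCon.coe_mul, ← RingCon.coe_one] at hv1 hv2
    have hk1 : K (x * b - 1) := (hQ _ _).mp hv1
    have hk2 : K (b * x - 1) := (hQ _ _).mp hv2
    have hn1 : IsNilpotent (x * b - 1) := K_nil _ hk1
    have hn2 : IsNilpotent (b * x - 1) := K_nil _ hk2
    have hu1 : IsUnit (x * b) := by
      have := hn1.isUnit_one_add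
      rwa [add_sub_cancel] at this
    have hu2 : IsUnit (b * x) := by
      have := hn2.isUnit_one_add
      rwa [add_sub_cancel] at this
    obtain ⟨u1, hu1a, _⟩ := isUnit_iff_exists.mp hu1
    obtain ⟨u2, _, hu2b⟩ := isUnit_iff_exists.mp hu2
    -- x * (b*u1) = 1 and (u2*b) * x = 1
    have hr : x * (b * u1) = 1 := by rw [← mul_assoc]; exact hu1a
    have hl : (u2 * b) * x = 1 := by rw [mul_assoc]; exact hu2b
    have heq : u2 * b = b * u1 := by
      calc u2 * b = (u2 * b) * (x * (b * u1)) := by rw [hr, mul_one]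
      _ = ((u2 * b) * x) * (b * u1) := by noncomm_ring
      _ = b * u1 := by rw [hl, one_mul]
    exact isUnit_iff_exists.mpr ⟨b * u1, hr, by rw [← heq]; exact hl⟩
  have hGQ : IsGWNCRing c.Quotient := by
    intro av hav
    obtain ⟨x, rfl⟩ := hsurj av
    have hx : ¬IsUnit x := by
      intro h
      exact hav (h.map c.mk')
    obtain ⟨e, q, he, hq, hd⟩ := hG x hx
    refine ⟨(e : c.Quotient), (q : c.Quotient), ?_, hq.map c.mk', ?_⟩
    · show ((e : c.Quotient)) * (e : c.Quotient) = (e : c.Quotient)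
      rw [← RingCon.coe_mul, he.eq]
    · rcases hd with h1 | h1
      · exact Or.inl (by rw [h1, RingCon.coe_add])
      · exact Or.inr (by rw [h1, RingCon.coe_sub])
  have hUQ : IsUURing c.Quotient := by
    intro uv huv
    obtain ⟨x, rfl⟩ := hsurj uv
    obtain ⟨q, hq, h1⟩ := hU x (hlift x huv)
    exact ⟨(q : c.Quotient), hq.map c.mk', by rw [h1, RingCon.coe_add, RingCon.coe_one]⟩
  have step : ∀ q : R, K (q * q) → K q := by
    intro q hqq
    have hq2 : ((q : c.Quotient)) * (q : c.Quotient) = 0 := by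
      rw [← RingCon.coe_mul]
      exact (hzero _).mpr hqq
    have hmain : ∀ y : R, IsNilpotent (q * y) := by
      intro y
      have hnilQ : IsNilpotent ((q : c.Quotient) * (y : c.Quotient)) := core_nil hGQ hUQ _ _ hq2
      obtain ⟨m, hm⟩ := hnilQ
      rw [← RingCon.coe_mul, ← RingCon.coe_pow] at hm
      have hKm : K ((q * y) ^ m) := (hzero _).mp hm
      obtain ⟨m', hm'⟩ := K_nil _ hKm
      exact ⟨m * m', by rw [pow_mul]; exact hm'⟩
    intro y
    exact (hmain y).isUnit_one_sub
  have nilK : ∀ n : ℕ, ∀ q : R, q ^ n = 0 → K q := by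
    intro n
    induction n using Nat.strong_induction_on with
    | _ n ih =>
      match n with
      | 0 =>
        intro q hn
        rw [pow_zero] at hn
        have hss : Subsingleton R := subsingleton_of_zero_eq_one hn.symm
        intro y
        rw [Subsingleton.elim (1 - q * y) 1]
        exact isUnit_one
      | 1 =>
        intro q hn
        rw [pow_one] at hn
        rw [hn]
        exact K_zero
      | (m + 2) =>
        intro q hn
        apply step
        apply ih (m + 1) (by omega) (q * q)
        have h2 : (q * q) ^ (m + 1) = q ^ (m + 2) * q ^ m := by
          rw [← sq, ← pow_mul, show 2 * (m + 1) = (m + 2) + m from by ring, pow_add]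
        rw [h2, hn, zero_mul]
  have nilK' : ∀ q : R, IsNilpotent q → K q := fun q ⟨n, hn⟩ => nilK n q hn
  -- final assembly
  intro a
  have hKa : K (a - a * a) := by
    by_cases hu : IsUnit a
    · obtain ⟨q, hq, h1⟩ := hU a hu
      have heq : a - a * a = -q + -(q * q) := by rw [h1]; noncomm_ring
      rw [heq]
      exact K_add _ _ (K_neg _ (nilK' q hq)) (K_neg _ (K_mul_right q q (nilK' q hq)))
    · obtain ⟨e, q, he, hq, hd⟩ := hG a hu
      have hKq := nilK' q hq
      rcases hd with h1 | h1
      · have heq : a - a * a = q + (-(q * q) + (-(q * e) + -(e * q))) := by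
          rw [h1, add_mul, mul_add, mul_add, he.eq]
          noncomm_ring
        rw [heq]
        exact K_add _ _ hKq (K_add _ _ (K_neg _ (K_mul_right q q hKq))
          (K_add _ _ (K_neg _ (K_mul_right q e hKq)) (K_neg _ (K_mul_left q e hKq))))
      · -- need -2 nilpotent
        obtain ⟨q2, hq2, h2⟩ := hU (-1 : R) (isUnit_one.neg)
        have h3 : q2 = -2 := by
          have h4 : (1 : R) + q2 = 1 + -2 := by rw [← h2]; norm_num
          exact add_left_cancel h4
        have hn2 : IsNilpotent (-2 : R) := h3 ▸ hq2
        have heq : a - a * a = q + (-(q * q) + (q * e + (e * q + (-2) * e))) := by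
          rw [h1, sub_mul, mul_sub, mul_sub, he.eq]
          noncomm_ring
        rw [heq]
        exact K_add _ _ hKq (K_add _ _ (K_neg _ (K_mul_right q q hKq))
          (K_add _ _ (K_mul_right q e hKq) (K_add _ _ (K_mul_left q e hKq)
            (K_mul_right (-2) e (nilK' _ hn2)))))
  exact strongly_split a (K_nil _ hKa)


theorem stronglyNilClean_iff_isGWNC_and_UU {R : Type*} [Ring R] :
    IsStronglyNilCleanRing R ↔ IsGWNCRing R ∧ IsUURing R := by
  constructor
  · exact GWNC_forward_aux
  · rintro ⟨hG, hU⟩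
    exact GWNC_backward_aux hG hU
end

section
/- Let R be a GWNC ring. Then 2 is a unit of R, or 2 is a nilpotent element of R, or 6 is a nilpotent element of R. -/
theorem two_unit_or_two_nilpotent_or_six_nilpotent_of_isGWNC {R : Type*} [Ring R]
    (h : IsGWNCRing R) :
    IsUnit (2 : R) ∨ IsNilpotent (2 : R) ∨ IsNilpotent (6 : R) := by
  by_cases hu : IsUnit (2 : R)
  · exact Or.inl hu
  obtain ⟨e, q, he, hq, hc⟩ := h 2 hu
  rcases hc with h2 | h2
  · right; left
    have he' : e = 2 - q := by rw [h2]; noncomm_ring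
    have heq : (2 - q) * (2 - q) = 2 - q := by rw [← he']; exact he
    have key : q * (3 - q) = 2 := by
      have : q * (3 - q) = (2 - q) - (2 - q) * (2 - q) + 2 := by noncomm_ring
      rw [this, heq]; noncomm_ring
    rw [← key]
    exact (Commute.sub_right (Commute.ofNat_right q 3) (Commute.refl q)).isNilpotent_mul_right hq
  · right; right
    have he' : e = q - 2 := by rw [h2]; noncomm_ring
    have heq : (q - 2) * (q - 2) = q - 2 := by rw [← he']; exact he
    have key : q * (5 - q) = 6 := by
      have : q * (5 - q) = (q - 2) - (q - 2) * (q - 2) + 3 * 2 := by noncomm_ring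
      rw [this, heq]; norm_num
    rw [← key]
    exact (Commute.sub_right (Commute.ofNat_right q 5) (Commute.refl q)).isNilpotent_mul_right hq
end
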